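/- The map Δ is multiplicative (Δ(aa') = Δ(a)Δ(a') for all a, a' ∈ A), coassociative ((Δ⊗id)∘Δ = (id⊗Δ)∘Δ as maps A → A⊗A⊗A), and satisfies Δ(1_A) = Σᵢ (1⊗E⁽¹⁾ᵢ)⊗(E⁽²⁾ᵢ⊗1), the canonical image of E. -/
import Mathlib

open scoped TensorProduct

set_option synthInstance.maxHeartbeats 1000000
set_option maxHeartbeats 1000000

noncomputable def DeltaCB {B C : Type*} [Ring B] [Algebra ℂ B] [Ring C] [Algebra ℂ C]
    (E : B ⊗[ℂ] C) :
    (C ⊗[ℂ] B) →ₗ[ℂ] (C ⊗[ℂ] B) ⊗[ℂ] (C ⊗[ℂ] B) :=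
  (TensorProduct.assoc ℂ (C ⊗[ℂ] B) C B).toLinearMap ∘ₗ
    (TensorProduct.congr (TensorProduct.assoc ℂ C B C).symm
      (LinearEquiv.refl ℂ B)).toLinearMap ∘ₗ
    (TensorProduct.assoc ℂ C (B ⊗[ℂ] C) B).symm.toLinearMap ∘ₗ
    LinearMap.lTensor C (TensorProduct.mk ℂ (B ⊗[ℂ] C) B E)

lemma DeltaCB_tmul {B C : Type*} [Ring B] [Algebra ℂ B] [Ring C] [Algebra ℂ C]
    (E : B ⊗[ℂ] C) (y : C) (x : B) :
    DeltaCB E (y ⊗ₜ x) =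
      TensorProduct.map (TensorProduct.mk ℂ C B y)
        ((TensorProduct.mk ℂ C B).flip x) E := by
  induction E using TensorProduct.induction_on with
  | zero => simp [DeltaCB]
  | tmul b c => simp [DeltaCB]
  | add u v hu hv =>
      simp only [map_add] at *
      simp [DeltaCB, map_add, LinearMap.lTensor_add] at *
      rw [hu, hv]

lemma DeltaCB_zero {B C : Type*} [Ring B] [Algebra ℂ B] [Ring C] [Algebra ℂ C] :
    DeltaCB (0 : B ⊗[ℂ] C) = 0 := by
  apply TensorProduct.ext'
  intro y x
  simp [DeltaCB_tmul]

lemma DeltaCB_add {B C : Type*} [Ring B] [Algebra ℂ B] [Ring C] [Algebra ℂ C]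
    (u v : B ⊗[ℂ] C) : DeltaCB (u + v) = DeltaCB u + DeltaCB v := by
  apply TensorProduct.ext'
  intro y x
  simp [DeltaCB_tmul]

lemma mul_key {B C : Type*} [Ring B] [Algebra ℂ B] [Ring C] [Algebra ℂ C]
    (E F : B ⊗[ℂ] C) (y y' : C) (x x' : B) :
    (TensorProduct.map (TensorProduct.mk ℂ C B y) ((TensorProduct.mk ℂ C B).flip x) E) *
      (TensorProduct.map (TensorProduct.mk ℂ C B y') ((TensorProduct.mk ℂ C B).flip x') F) =
    TensorProduct.map (TensorProduct.mk ℂ C B (y * y'))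
      ((TensorProduct.mk ℂ C B).flip (x * x')) (E * F) := by
  induction E using TensorProduct.induction_on with
  | zero => simp
  | add u v hu hv => simp only [map_add, add_mul, hu, hv]
  | tmul b c =>
      induction F using TensorProduct.induction_on with
      | zero => simp
      | add u v hu hv => simp only [map_add, mul_add, hu, hv]
      | tmul b' c' => simp [Algebra.TensorProduct.tmul_mul_tmul]

lemma coassoc_key {B C : Type*} [Ring B] [Algebra ℂ B] [Ring C] [Algebra ℂ C]
    (E F : B ⊗[ℂ] C) (y : C) (x : B) :
    (TensorProduct.assoc ℂ (C ⊗[ℂ] B) (C ⊗[ℂ] B) (C ⊗[ℂ] B))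
        (LinearMap.rTensor (C ⊗[ℂ] B) (DeltaCB F) (DeltaCB E (y ⊗ₜ x))) =
      LinearMap.lTensor (C ⊗[ℂ] B) (DeltaCB E) (DeltaCB F (y ⊗ₜ x)) := by
  rw [DeltaCB_tmul, DeltaCB_tmul]
  induction E using TensorProduct.induction_on with
  | zero => simp [DeltaCB_zero]
  | add u v hu hv =>
      simp only [map_add, DeltaCB_add, LinearMap.lTensor_add, LinearMap.add_apply, hu, hv]
  | tmul b c =>
      induction F using TensorProduct.induction_on with
      | zero => simp [DeltaCB_zero]
      | add u v hu hv =>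
          simp only [map_add, DeltaCB_add, LinearMap.rTensor_add, LinearMap.add_apply, hu, hv]
      | tmul b' c' => simp [DeltaCB_tmul]

/-- `Δ` is multiplicative, coassociative, and `Δ(1) = Σᵢ (1⊗E⁽¹⁾ᵢ)⊗(E⁽²⁾ᵢ⊗1)`, the
canonical image of `E`. -/
theorem stmt17 {B C : Type*} [Ring B] [Algebra ℂ B] [Ring C] [Algebra ℂ C]
    (E : B ⊗[ℂ] C) (hEidem : E * E = E) :
    (∀ a a' : C ⊗[ℂ] B, DeltaCB E (a * a') = DeltaCB E a * DeltaCB E a') ∧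
    ((TensorProduct.assoc ℂ (C ⊗[ℂ] B) (C ⊗[ℂ] B) (C ⊗[ℂ] B)).toLinearMap ∘ₗ
        LinearMap.rTensor (C ⊗[ℂ] B) (DeltaCB E) ∘ₗ DeltaCB E =
      LinearMap.lTensor (C ⊗[ℂ] B) (DeltaCB E) ∘ₗ DeltaCB E) ∧
    (DeltaCB E (1 : C ⊗[ℂ] B) =
      TensorProduct.map (TensorProduct.mk ℂ C B (1 : C))
        ((TensorProduct.mk ℂ C B).flip (1 : B)) E) := by
  refine ⟨fun a a' => ?_, ?_, ?_⟩
  · induction a using TensorProduct.induction_on with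
    | zero => simp
    | add u v hu hv => simp [add_mul, hu, hv]
    | tmul y x =>
        induction a' using TensorProduct.induction_on with
        | zero => simp
        | add u v hu hv => simp [mul_add, hu, hv]
        | tmul y' x' =>
            rw [Algebra.TensorProduct.tmul_mul_tmul, DeltaCB_tmul, DeltaCB_tmul,
              DeltaCB_tmul, mul_key, hEidem]
  · apply TensorProduct.ext'
    intro y x
    simpa using coassoc_key E E y x
  · rw [show (1 : C ⊗[ℂ] B) = (1 : C) ⊗ₜ (1 : B) from rfl, DeltaCB_tmul]
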